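/- arXiv:2401.01295 — 10 statements merged into one kernel-verified Lean document; each statement's English description precedes it below -/
import Mathlib

section
/- If H is a Hilbert space of functions on a set X with bounded pointwise evaluation, and Δ : H → H ⊗ H is a bounded linear operator satisfying Δ(k_x) = k_x ⊗ k_x for all kernel sections k_x, then for all f, g ∈ H the pointwise product fg lies in H and ‖fg‖ ≤ ‖Δ‖ ‖f‖ ‖g‖. -/
open scoped ComplexInnerProductSpace

noncomputable section

/-- An abstract Hilbert tensor product structure: a bilinear map `tmul` whose
elementary tensors satisfy the inner product identity
`⟪a ⊗ b, c ⊗ d⟫ = ⟪a, c⟫ ⟪b, d⟫` and whose elementary tensors span a dense subspace. -/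
structure TensorLike (H K HT : Type*) [NormedAddCommGroup H] [InnerProductSpace ℂ H]
    [NormedAddCommGroup K] [InnerProductSpace ℂ K]
    [NormedAddCommGroup HT] [InnerProductSpace ℂ HT] where
  tmul : H →ₗ[ℂ] K →ₗ[ℂ] HT
  inner_tmul : ∀ (a c : H) (b d : K),
    ⟪tmul a b, tmul c d⟫ = ⟪a, c⟫ * ⟪b, d⟫
  dense_span : Dense (Submodule.span ℂ (Set.range fun p : H × K => tmul p.1 p.2) : Set HT)

/-- if `Δ : H → H ⊗ H` is a bounded operator with `Δ k_x = k_x ⊗ k_x`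
for all kernel sections `k_x`, then every pointwise product `fg` is represented by an
element of `H` of norm at most `‖Δ‖ ‖f‖ ‖g‖`. -/
theorem stmt_0 {X H HT : Type*}
    [NormedAddCommGroup H] [InnerProductSpace ℂ H] [CompleteSpace H]
    [NormedAddCommGroup HT] [InnerProductSpace ℂ HT] [CompleteSpace HT]
    (k : X → H) (T : TensorLike H H HT) (Δ : H →L[ℂ] HT)
    (hΔ : ∀ x, Δ (k x) = T.tmul (k x) (k x)) (f g : H) :
    ∃ h : H, (∀ x, ⟪k x, h⟫ = ⟪k x, f⟫ * ⟪k x, g⟫) ∧ ‖h‖ ≤ ‖Δ‖ * ‖f‖ * ‖g‖ := by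
  refine ⟨ContinuousLinearMap.adjoint Δ (T.tmul f g), fun x => ?_, ?_⟩
  · rw [ContinuousLinearMap.adjoint_inner_right, hΔ, T.inner_tmul]
  · have hnorm : ‖T.tmul f g‖ = ‖f‖ * ‖g‖ := by
      have h2 := T.inner_tmul f f g g
      rw [inner_self_eq_norm_sq_to_K (𝕜 := ℂ), inner_self_eq_norm_sq_to_K (𝕜 := ℂ),
        inner_self_eq_norm_sq_to_K (𝕜 := ℂ)] at h2
      have h3 : ‖T.tmul f g‖ ^ 2 = (‖f‖ * ‖g‖) ^ 2 := by
        rw [mul_pow]; exact_mod_cast h2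
      calc ‖T.tmul f g‖ = Real.sqrt (‖T.tmul f g‖ ^ 2) :=
            (Real.sqrt_sq (norm_nonneg _)).symm
        _ = ‖f‖ * ‖g‖ := by
            rw [h3, Real.sqrt_sq (by positivity)]
    calc ‖ContinuousLinearMap.adjoint Δ (T.tmul f g)‖
        ≤ ‖ContinuousLinearMap.adjoint Δ‖ * ‖T.tmul f g‖ :=
          (ContinuousLinearMap.adjoint Δ).le_opNorm _
      _ = ‖Δ‖ * ‖f‖ * ‖g‖ := by
          rw [LinearIsometryEquiv.norm_map ContinuousLinearMap.adjoint Δ, hnorm, mul_assoc]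
end
end

section
/- Let H be a unital RKHA (the constant function 1 belongs to H). Then for every f ∈ H the multiplication operator M_f : H → H, M_f(g) = fg, is bounded, and (1/‖1‖_H) ‖f‖_H ≤ ‖M_f‖_op ≤ ‖Δ‖_op ‖f‖_H. Hence the operator norm on H is equivalent to the Hilbert space norm. -/
/-!
Testing the identity `⟪k x, Δ* (f ⊗ 1)⟫ = ⟪k x ⊗ k x, f ⊗ 1⟫ = ⟪k x, f⟫ ⟪k x, 1⟫ = ⟪k x, f⟫` against
the dense family of kernel sections shows `M_f 1 = f`, whence `‖f‖ ≤ ‖M_f‖ ‖1‖`. The upper bound is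
`‖M_f‖ ≤ ‖Δ*‖ ‖g ↦ f ⊗ g‖ = ‖Δ‖ ‖f‖`, since `‖f ⊗ g‖ = ‖f‖ ‖g‖`.
-/

open scoped ComplexInnerProductSpace

noncomputable section

theorem Dense.eq_of_inner_right_of_span {𝕜 E : Type*} [RCLike 𝕜] [NormedAddCommGroup E]
    [InnerProductSpace 𝕜 E] {s : Set E} (hs : Dense (Submodule.span 𝕜 s : Set E)) {x y : E}
    (h : ∀ v ∈ s, inner 𝕜 v x = inner 𝕜 v y) : x = y :=
  hs.eq_of_inner_right 𝕜 fun v hv ↦ by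
    induction hv using Submodule.span_induction with
    | mem v hv => exact h v hv
    | zero => simp
    | add u w _ _ hu hw => simp [inner_add_left, hu, hw]
    | smul c u _ hu => simp [inner_smul_left, hu]

namespace TensorLike

section Tensor

variable {H K HT : Type*} [NormedAddCommGroup H] [InnerProductSpace ℂ H]
    [NormedAddCommGroup K] [InnerProductSpace ℂ K]
    [NormedAddCommGroup HT] [InnerProductSpace ℂ HT] (T : TensorLike H K HT)

theorem norm_tmul (a : H) (b : K) : ‖T.tmul a b‖ = ‖a‖ * ‖b‖ := by
  have h := T.inner_tmul a a b b
  simp only [inner_self_eq_norm_sq_to_K] at h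
  have h_sq : ‖T.tmul a b‖ ^ 2 = (‖a‖ * ‖b‖) ^ 2 := by rw [mul_pow]; exact_mod_cast h
  exact (pow_left_inj₀ (norm_nonneg _) (by positivity) two_ne_zero).1 h_sq

def tmulLeft (a : H) : K →L[ℂ] HT :=
  (T.tmul a).mkContinuous ‖a‖ fun b ↦ (T.norm_tmul a b).le

theorem norm_tmulLeft_le (a : H) : ‖T.tmulLeft a‖ ≤ ‖a‖ :=
  LinearMap.mkContinuous_norm_le _ (norm_nonneg a) _

end Tensor

variable {H HT : Type*} [NormedAddCommGroup H] [InnerProductSpace ℂ H] [CompleteSpace H]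
    [NormedAddCommGroup HT] [InnerProductSpace ℂ HT] [CompleteSpace HT]
    (T : TensorLike H H HT) (Δ : H →L[ℂ] HT)

/-- The operator `M_f`: pointwise multiplication by `f` is `g ↦ Δ* (f ⊗ g)`. -/
def mulOperator (f : H) : H →L[ℂ] H :=
  ContinuousLinearMap.adjoint Δ ∘L T.tmulLeft f

theorem mulOperator_apply (f g : H) :
    T.mulOperator Δ f g = ContinuousLinearMap.adjoint Δ (T.tmul f g) := rfl

theorem norm_mulOperator_le (f : H) : ‖T.mulOperator Δ f‖ ≤ ‖Δ‖ * ‖f‖ :=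
  calc ‖T.mulOperator Δ f‖ ≤ ‖ContinuousLinearMap.adjoint Δ‖ * ‖T.tmulLeft f‖ :=
        ContinuousLinearMap.opNorm_comp_le _ _
    _ ≤ ‖Δ‖ * ‖f‖ := by
        rw [LinearIsometryEquiv.norm_map]
        gcongr
        exact T.norm_tmulLeft_le f

variable {X : Type*} {k : X → H} {one : H}

theorem mulOperator_apply_unit (hk : Dense (Submodule.span ℂ (Set.range k) : Set H))
    (hΔ : ∀ x, Δ (k x) = T.tmul (k x) (k x)) (hone : ∀ x, ⟪k x, one⟫ = 1) (f : H) :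
    T.mulOperator Δ f one = f := by
  refine hk.eq_of_inner_right_of_span ?_
  rintro _ ⟨x, rfl⟩
  rw [mulOperator_apply, ContinuousLinearMap.adjoint_inner_right, hΔ, T.inner_tmul, hone, mul_one]

theorem norm_le_norm_mulOperator_mul (hk : Dense (Submodule.span ℂ (Set.range k) : Set H))
    (hΔ : ∀ x, Δ (k x) = T.tmul (k x) (k x)) (hone : ∀ x, ⟪k x, one⟫ = 1) (f : H) :
    ‖f‖ ≤ ‖T.mulOperator Δ f‖ * ‖one‖ :=
  calc ‖f‖ = ‖T.mulOperator Δ f one‖ := by rw [T.mulOperator_apply_unit Δ hk hΔ hone]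
    _ ≤ ‖T.mulOperator Δ f‖ * ‖one‖ := ContinuousLinearMap.le_opNorm _ _

end TensorLike

theorem stmt_2_general {X H HT : Type*}
    [NormedAddCommGroup H] [InnerProductSpace ℂ H] [CompleteSpace H]
    [NormedAddCommGroup HT] [InnerProductSpace ℂ HT] [CompleteSpace HT]
    (k : X → H) (hk : Dense (Submodule.span ℂ (Set.range k) : Set H))
    (T : TensorLike H H HT) (Δ : H →L[ℂ] HT)
    (hΔ : ∀ x, Δ (k x) = T.tmul (k x) (k x))
    (one : H) (hone : ∀ x, ⟪k x, one⟫ = 1) (f : H) :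
    ∃ M : H →L[ℂ] H, (∀ g, M g = ContinuousLinearMap.adjoint Δ (T.tmul f g)) ∧
      (1 / ‖one‖) * ‖f‖ ≤ ‖M‖ ∧ ‖M‖ ≤ ‖Δ‖ * ‖f‖ := by
  refine ⟨T.mulOperator Δ f, T.mulOperator_apply Δ f, ?_, T.norm_mulOperator_le Δ f⟩
  rw [one_div_mul_eq_div]
  exact div_le_of_le_mul₀ (norm_nonneg _) (norm_nonneg _)
    (T.norm_le_norm_mulOperator_mul Δ hk hΔ hone f)

/-- in a unital RKHA, every multiplication operator `M_f` is bounded with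
`(1/‖1‖) ‖f‖ ≤ ‖M_f‖ ≤ ‖Δ‖ ‖f‖`. -/
theorem stmt_2 {X H HT : Type*} [Nonempty X]
    [NormedAddCommGroup H] [InnerProductSpace ℂ H] [CompleteSpace H]
    [NormedAddCommGroup HT] [InnerProductSpace ℂ HT] [CompleteSpace HT]
    (k : X → H) (hk : Dense (Submodule.span ℂ (Set.range k) : Set H))
    (T : TensorLike H H HT) (Δ : H →L[ℂ] HT)
    (hΔ : ∀ x, Δ (k x) = T.tmul (k x) (k x))
    (one : H) (hone : ∀ x, ⟪k x, one⟫ = 1) (f : H) :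
    ∃ M : H →L[ℂ] H, (∀ g, M g = ContinuousLinearMap.adjoint Δ (T.tmul f g)) ∧
      (1 / ‖one‖) * ‖f‖ ≤ ‖M‖ ∧ ‖M‖ ≤ ‖Δ‖ * ‖f‖ :=
  stmt_2_general k hk T Δ hΔ one hone f
end
end

section
/- Let H₁ ⊂ L(X₁) and H₂ ⊂ L(X₂) be RKHAs with bounded comultiplications Δ₁, Δ₂. Then the Hilbert tensor product H₁ ⊗ H₂, viewed as an RKHS on X₁ × X₂ with kernel sections k_{(x,y)} = k¹_x ⊗ k²_y, is an RKHA: the map k¹_x ⊗ k²_y ↦ (k¹_x ⊗ k²_y) ⊗ (k¹_x ⊗ k²_y) extends to a bounded operator, given by (id ⊗ τ ⊗ id) ∘ (Δ₁ ⊗ Δ₂) where τ is the tensor swap unitary. -/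
open scoped ComplexInnerProductSpace

noncomputable section

/-!
The comultiplication of the product is `(Δ₁ ⊗ Δ₂)` followed by the shuffle
`(a ⊗ b) ⊗ (c ⊗ d) ↦ (a ⊗ c) ⊗ (b ⊗ d)`. Both are first built on algebraic tensor products, which
carry the inner product `⟪a ⊗ b, c ⊗ d⟫ = ⟪a, c⟫ ⟪b, d⟫`: there `‖Δ₁ ⊗ Δ₂‖ ≤ ‖Δ₁‖ ‖Δ₂‖` (a Schur
product argument, `TensorProduct.norm_mapL_le`) and the shuffle is an isometry. Every `TensorLike`
space receives the algebraic tensor product isometrically with dense range, so both maps extend by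
continuity without increasing their norms.
-/

open scoped TensorProduct
open TensorProduct

namespace TensorProduct

variable {𝕜 E F G H : Type*} [RCLike 𝕜]

theorem denseRange_map [AddCommGroup E] [Module 𝕜 E] [AddCommGroup F] [Module 𝕜 F]
    [NormedAddCommGroup G] [InnerProductSpace 𝕜 G] [NormedAddCommGroup H] [InnerProductSpace 𝕜 H]
    {f : E →ₗ[𝕜] G} {g : F →ₗ[𝕜] H} (hf : DenseRange f) (hg : DenseRange g) :
    DenseRange (map f g) := by
  let S := (LinearMap.range (map f g)).topologicalClosure
  have hS : ∀ p : G × H, p.1 ⊗ₜ[𝕜] p.2 ∈ S :=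
    isClosed_property (hf.prodMap hg)
      ((Submodule.isClosed_topologicalClosure _).preimage continuous_tmul)
      fun p ↦ Submodule.le_topologicalClosure _ ⟨p.1 ⊗ₜ p.2, rfl⟩
  have : S = ⊤ := by
    rw [eq_top_iff, ← span_tmul_eq_top, Submodule.span_le]
    rintro _ ⟨x, y, rfl⟩
    exact hS (x, y)
  exact Submodule.dense_iff_topologicalClosure_eq_top.2 this

variable [NormedAddCommGroup E] [InnerProductSpace 𝕜 E]
  [NormedAddCommGroup F] [InnerProductSpace 𝕜 F] [NormedAddCommGroup G] [InnerProductSpace 𝕜 G] [NormedAddCommGroup H] [InnerProductSpace 𝕜 H]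

theorem inner_rightComm (x y : E ⊗[𝕜] F ⊗[𝕜] G) :
    inner 𝕜 (rightComm 𝕜 E F G x) (rightComm 𝕜 E F G y) = inner 𝕜 x y := by
  rw [rightComm_def]
  simp only [LinearEquiv.trans_apply]
  rw [← assocIsometry_symm_apply, ← assocIsometry_symm_apply, LinearIsometryEquiv.inner_map_map]
  exact ((congrIsometry (.refl 𝕜 E) (commIsometry 𝕜 F G)).inner_map_map _ _).trans
    (inner_assoc_assoc x y)

theorem inner_tensorTensorTensorComm (x y : E ⊗[𝕜] F ⊗[𝕜] (G ⊗[𝕜] H)) :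
    inner 𝕜 (tensorTensorTensorComm 𝕜 E F G H x) (tensorTensorTensorComm 𝕜 E F G H y) =
      inner 𝕜 x y := by
  simp only [tensorTensorTensorComm, LinearEquiv.trans_apply]
  rw [inner_assoc_assoc, ← assocIsometry_symm_apply, ← assocIsometry_symm_apply]
  exact ((congrIsometry ((rightComm 𝕜 E F G).isometryOfInner inner_rightComm)
    (.refl 𝕜 H)).inner_map_map _ _).trans (LinearIsometryEquiv.inner_map_map _ x y)

end TensorProduct

namespace TensorLike

section

variable {H K HT : Type*} [NormedAddCommGroup H] [InnerProductSpace ℂ H]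
  [NormedAddCommGroup K] [InnerProductSpace ℂ K] [NormedAddCommGroup HT] [InnerProductSpace ℂ HT]
  (t : TensorLike H K HT)

theorem inner_lift_tmul (x y : H ⊗[ℂ] K) : ⟪lift t.tmul x, lift t.tmul y⟫ = ⟪x, y⟫ := by
  induction x using TensorProduct.induction_on with
  | zero => simp
  | add x x' hx hx' => simp only [map_add, inner_add_left, hx, hx']
  | tmul a b =>
    induction y using TensorProduct.induction_on with
    | zero => simp
    | add y y' hy hy' => simp only [map_add, inner_add_right, hy, hy']
    | tmul c d => simp [t.inner_tmul]

def toLinearIsometry : H ⊗[ℂ] K →ₗᵢ[ℂ] HT :=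
  (lift t.tmul).isometryOfInner t.inner_lift_tmul

@[simp]
theorem toLinearIsometry_tmul (a : H) (b : K) : t.toLinearIsometry (a ⊗ₜ b) = t.tmul a b :=
  lift.tmul a b

theorem denseRange_toLinearIsometry : DenseRange t.toLinearIsometry :=
  t.dense_span.mono (Submodule.span_le.2 (by
    rintro _ ⟨p, rfl⟩
    exact ⟨p.1 ⊗ₜ p.2, t.toLinearIsometry_tmul p.1 p.2⟩) :
      _ ≤ LinearMap.range t.toLinearIsometry.toLinearMap)

end

theorem exists_tensorTensorTensorComm {A B C D TAB TCD TAC TBD T : Type*}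
    [NormedAddCommGroup A] [InnerProductSpace ℂ A] [NormedAddCommGroup B] [InnerProductSpace ℂ B]
    [NormedAddCommGroup C] [InnerProductSpace ℂ C] [NormedAddCommGroup D] [InnerProductSpace ℂ D]
    [NormedAddCommGroup TAB] [InnerProductSpace ℂ TAB]
    [NormedAddCommGroup TCD] [InnerProductSpace ℂ TCD]
    [NormedAddCommGroup TAC] [InnerProductSpace ℂ TAC]
    [NormedAddCommGroup TBD] [InnerProductSpace ℂ TBD]
    [NormedAddCommGroup T] [InnerProductSpace ℂ T] [CompleteSpace T]
    (tAB : TensorLike A B TAB) (tCD : TensorLike C D TCD) (tAC : TensorLike A C TAC)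
    (tBD : TensorLike B D TBD) (t : TensorLike TAC TBD T) :
    ∃ J : TAB ⊗[ℂ] TCD →L[ℂ] T,
      (∀ a b c d, J (tAB.tmul a b ⊗ₜ tCD.tmul c d) = t.tmul (tAC.tmul a c) (tBD.tmul b d)) ∧
      ‖J‖ ≤ 1 := by
  obtain ⟨σ, hσ⟩ : ∃ σ : A ⊗[ℂ] B ⊗[ℂ] (C ⊗[ℂ] D) →ₗᵢ[ℂ] T, ∀ a b c d,
      σ ((a ⊗ₜ b) ⊗ₜ (c ⊗ₜ d)) = t.tmul (tAC.tmul a c) (tBD.tmul b d) :=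
    ⟨t.toLinearIsometry.comp <| (mapIsometry tAC.toLinearIsometry tBD.toLinearIsometry).comp <|
      (tensorTensorTensorComm ℂ A B C D).toLinearMap.isometryOfInner
        fun x y ↦ inner_tensorTensorTensorComm x y, fun a b c d ↦ by simp⟩
  let e := mapIsometry tAB.toLinearIsometry tCD.toLinearIsometry
  have he : DenseRange e :=
    denseRange_map tAB.denseRange_toLinearIsometry tCD.denseRange_toLinearIsometry
  have hσe : ∀ x, ‖σ x‖ ≤ 1 * ‖e x‖ := fun x ↦ by rw [one_mul, σ.norm_map, e.norm_map]
  refine ⟨σ.toLinearMap.extendOfNorm e.toLinearMap, fun a b c d ↦ ?_,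
    LinearMap.opNorm_extendOfNorm_le he zero_le_one hσe⟩
  simpa [e, hσ] using LinearMap.extendOfNorm_eq he ⟨1, hσe⟩ ((a ⊗ₜ b) ⊗ₜ (c ⊗ₜ d))

end TensorLike

theorem stmt_5_general {X₁ X₂ H₁ H₂ T₁ T₂ H₁₂ HT : Type*}
    [NormedAddCommGroup H₁] [InnerProductSpace ℂ H₁]
    [NormedAddCommGroup H₂] [InnerProductSpace ℂ H₂]
    [NormedAddCommGroup T₁] [InnerProductSpace ℂ T₁]
    [NormedAddCommGroup T₂] [InnerProductSpace ℂ T₂]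
    [NormedAddCommGroup H₁₂] [InnerProductSpace ℂ H₁₂]
    [NormedAddCommGroup HT] [InnerProductSpace ℂ HT] [CompleteSpace HT]
    (k₁ : X₁ → H₁) (k₂ : X₂ → H₂)
    (t₁ : TensorLike H₁ H₁ T₁) (t₂ : TensorLike H₂ H₂ T₂)
    (Δ₁ : H₁ →L[ℂ] T₁) (hΔ₁ : ∀ x, Δ₁ (k₁ x) = t₁.tmul (k₁ x) (k₁ x))
    (Δ₂ : H₂ →L[ℂ] T₂) (hΔ₂ : ∀ y, Δ₂ (k₂ y) = t₂.tmul (k₂ y) (k₂ y))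
    (t₁₂ : TensorLike H₁ H₂ H₁₂) (tt : TensorLike H₁₂ H₁₂ HT) :
    ∃ Δ : H₁₂ →L[ℂ] HT,
      (∀ x y, Δ (t₁₂.tmul (k₁ x) (k₂ y)) =
        tt.tmul (t₁₂.tmul (k₁ x) (k₂ y)) (t₁₂.tmul (k₁ x) (k₂ y))) ∧
      ‖Δ‖ ≤ ‖Δ₁‖ * ‖Δ₂‖ := by
  obtain ⟨J, hJ, hJ_norm⟩ := TensorLike.exists_tensorTensorTensorComm t₁ t₂ t₁₂ t₁₂ tt
  let e := t₁₂.toLinearIsometry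
  have hΔe : ∀ x, ‖(J ∘L mapL Δ₁ Δ₂) x‖ ≤ ‖Δ₁‖ * ‖Δ₂‖ * ‖e x‖ := fun x ↦
    calc ‖J (mapL Δ₁ Δ₂ x)‖ ≤ 1 * (‖Δ₁‖ * ‖Δ₂‖ * ‖x‖) :=
          J.le_of_opNorm_le_of_le hJ_norm ((mapL Δ₁ Δ₂).le_of_opNorm_le (norm_mapL_le Δ₁ Δ₂) x)
      _ = ‖Δ₁‖ * ‖Δ₂‖ * ‖e x‖ := by rw [one_mul, e.norm_map]
  refine ⟨(J ∘L mapL Δ₁ Δ₂).toLinearMap.extendOfNorm e.toLinearMap, fun x y ↦ ?_,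
    LinearMap.opNorm_extendOfNorm_le t₁₂.denseRange_toLinearIsometry (by positivity) hΔe⟩
  simpa [e, hΔ₁, hΔ₂, hJ] using
    LinearMap.extendOfNorm_eq t₁₂.denseRange_toLinearIsometry ⟨_, hΔe⟩ (k₁ x ⊗ₜ k₂ y)

/-- the Hilbert tensor product of two RKHAs is an RKHA: the map
`k¹_x ⊗ k²_y ↦ (k¹_x ⊗ k²_y) ⊗ (k¹_x ⊗ k²_y)` extends to a bounded operator
(of norm at most `‖Δ₁‖ ‖Δ₂‖`, coming from `(id ⊗ τ ⊗ id)(Δ₁ ⊗ Δ₂)`). -/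
theorem stmt_5 {X₁ X₂ H₁ H₂ T₁ T₂ H₁₂ HT : Type*}
    [NormedAddCommGroup H₁] [InnerProductSpace ℂ H₁] [CompleteSpace H₁]
    [NormedAddCommGroup H₂] [InnerProductSpace ℂ H₂] [CompleteSpace H₂]
    [NormedAddCommGroup T₁] [InnerProductSpace ℂ T₁] [CompleteSpace T₁]
    [NormedAddCommGroup T₂] [InnerProductSpace ℂ T₂] [CompleteSpace T₂]
    [NormedAddCommGroup H₁₂] [InnerProductSpace ℂ H₁₂] [CompleteSpace H₁₂]
    [NormedAddCommGroup HT] [InnerProductSpace ℂ HT] [CompleteSpace HT]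
    (k₁ : X₁ → H₁) (k₂ : X₂ → H₂)
    (t₁ : TensorLike H₁ H₁ T₁) (t₂ : TensorLike H₂ H₂ T₂)
    (Δ₁ : H₁ →L[ℂ] T₁) (hΔ₁ : ∀ x, Δ₁ (k₁ x) = t₁.tmul (k₁ x) (k₁ x))
    (Δ₂ : H₂ →L[ℂ] T₂) (hΔ₂ : ∀ y, Δ₂ (k₂ y) = t₂.tmul (k₂ y) (k₂ y))
    (t₁₂ : TensorLike H₁ H₂ H₁₂) (tt : TensorLike H₁₂ H₁₂ HT) :
    ∃ Δ : H₁₂ →L[ℂ] HT,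
      (∀ x y, Δ (t₁₂.tmul (k₁ x) (k₂ y)) =
        tt.tmul (t₁₂.tmul (k₁ x) (k₂ y)) (t₁₂.tmul (k₁ x) (k₂ y))) ∧
      ‖Δ‖ ≤ ‖Δ₁‖ * ‖Δ₂‖ :=
  stmt_5_general k₁ k₂ t₁ t₂ Δ₁ hΔ₁ Δ₂ hΔ₂ t₁₂ tt
end
end

section
/- Let H ⊂ L(X) be an RKHA and φ : S → X any map. Let H(k∘φ) be the pullback RKHS on S with kernel (s,t) ↦ k(φ(s),φ(t)) and T_φ : H(k∘φ) → H the isometry with T_φ((k∘φ)_s) = k_{φ(s)}. Then (T_φ* ⊗ T_φ*) Δ T_φ is a bounded operator on H(k∘φ) sending (k∘φ)_s to (k∘φ)_s ⊗ (k∘φ)_s; hence H(k∘φ) is an RKHA. -/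
open scoped ComplexInnerProductSpace

noncomputable section

/-!
Since `T_φ` preserves inner products, the elementary tensors `a ⊗ b` and `T_φ a ⊗ T_φ b` have
the same Gram matrix, so `T_φ ⊗ T_φ` is a well-defined isometry `R` of the tensor products.
Its adjoint `R*` is a contraction with `R* R = 1`, and `R* Δ T_φ` sends `(k∘φ)_s` to
`R* (k_{φ s} ⊗ k_{φ s}) = R* R ((k∘φ)_s ⊗ (k∘φ)_s) = (k∘φ)_s ⊗ (k∘φ)_s`.
-/

section GramMatrix

open scoped InnerProductSpace

variable {𝕜 ι E F : Type*} [RCLike 𝕜] [NormedAddCommGroup E] [InnerProductSpace 𝕜 E]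
  [NormedAddCommGroup F] [InnerProductSpace 𝕜 F] {v : ι → E} {w : ι → F}

theorem norm_linearCombination_eq_of_inner_eq (h : ∀ i j, ⟪w i, w j⟫_𝕜 = ⟪v i, v j⟫_𝕜)
    (c : ι →₀ 𝕜) :
    ‖Finsupp.linearCombination 𝕜 w c‖ = ‖Finsupp.linearCombination 𝕜 v c‖ := by
  have hinner : ⟪Finsupp.linearCombination 𝕜 w c, Finsupp.linearCombination 𝕜 w c⟫_𝕜 =
      ⟪Finsupp.linearCombination 𝕜 v c, Finsupp.linearCombination 𝕜 v c⟫_𝕜 := by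
    simp only [Finsupp.linearCombination_apply, Finsupp.sum, sum_inner, inner_sum,
      inner_smul_left, inner_smul_right, h]
  rw [@norm_eq_sqrt_re_inner 𝕜, @norm_eq_sqrt_re_inner 𝕜, hinner]

theorem exists_linearIsometry_apply_eq_of_inner_eq [CompleteSpace F]
    (hv : Dense (Submodule.span 𝕜 (Set.range v) : Set E))
    (h : ∀ i j, ⟪w i, w j⟫_𝕜 = ⟪v i, v j⟫_𝕜) :
    ∃ R : E →ₗᵢ[𝕜] F, ∀ i, R (v i) = w i := by
  have hdense : DenseRange (Finsupp.linearCombination 𝕜 v) := by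
    rw [DenseRange, ← LinearMap.coe_range, Finsupp.range_linearCombination]
    exact hv
  have hbound : ∀ c, ‖Finsupp.linearCombination 𝕜 w c‖ ≤
      1 * ‖Finsupp.linearCombination 𝕜 v c‖ := fun c => by
    rw [one_mul, norm_linearCombination_eq_of_inner_eq h]
  set R := (Finsupp.linearCombination 𝕜 w).extendOfNorm (Finsupp.linearCombination 𝕜 v)
  have hR : ∀ c, R (Finsupp.linearCombination 𝕜 v c) = Finsupp.linearCombination 𝕜 w c :=
    LinearMap.extendOfNorm_eq hdense ⟨1, hbound⟩
  have hRnorm : ∀ u, ‖R u‖ = ‖u‖ := by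
    refine fun u => hdense.induction (fun _ ⟨c, hc⟩ => ?_)
      (isClosed_eq (by fun_prop) (by fun_prop)) u
    rw [← hc, hR, norm_linearCombination_eq_of_inner_eq h]
  refine ⟨⟨R.toLinearMap, hRnorm⟩, fun i => ?_⟩
  simpa using hR (Finsupp.single i 1)

end GramMatrix

namespace TensorLike

variable {H K HT H' K' HT' : Type*}
  [NormedAddCommGroup H] [InnerProductSpace ℂ H] [NormedAddCommGroup K] [InnerProductSpace ℂ K]
  [NormedAddCommGroup HT] [InnerProductSpace ℂ HT]
  [NormedAddCommGroup H'] [InnerProductSpace ℂ H'] [NormedAddCommGroup K'] [InnerProductSpace ℂ K']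
  [NormedAddCommGroup HT'] [InnerProductSpace ℂ HT']

theorem exists_linearIsometry_tmul_map [CompleteSpace HT'] (T : TensorLike H K HT)
    (T' : TensorLike H' K' HT') (A : H →ₗᵢ[ℂ] H') (B : K →ₗᵢ[ℂ] K') :
    ∃ R : HT →ₗᵢ[ℂ] HT', ∀ a b, R (T.tmul a b) = T'.tmul (A a) (B b) := by
  obtain ⟨R, hR⟩ := exists_linearIsometry_apply_eq_of_inner_eq
    (w := fun p : H × K => T'.tmul (A p.1) (B p.2)) T.dense_span fun p q => by
      simp only [T.inner_tmul, T'.inner_tmul, LinearIsometry.inner_map_map]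
  exact ⟨R, fun a b => hR (a, b)⟩

/-- `Q` is the adjoint `A* ⊗ B*` of the isometry `A ⊗ B`. -/
theorem exists_norm_le_one_apply_tmul_map [CompleteSpace HT] [CompleteSpace HT']
    (T : TensorLike H K HT) (T' : TensorLike H' K' HT') (A : H →ₗᵢ[ℂ] H') (B : K →ₗᵢ[ℂ] K') :
    ∃ Q : HT' →L[ℂ] HT, ‖Q‖ ≤ 1 ∧ ∀ a b, Q (T'.tmul (A a) (B b)) = T.tmul a b := by
  obtain ⟨R, hR⟩ := T.exists_linearIsometry_tmul_map T' A B
  refine ⟨ContinuousLinearMap.adjoint R.toContinuousLinearMap, ?_, fun a b => ?_⟩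
  · rw [LinearIsometryEquiv.norm_map]
    exact R.norm_toContinuousLinearMap_le
  · rw [← hR]
    exact congrArg (· (T.tmul a b)) R.adjoint_comp_self

end TensorLike

theorem stmt_6_general {X S H HT Hφ HTφ : Type*}
    [NormedAddCommGroup H] [InnerProductSpace ℂ H]
    [NormedAddCommGroup HT] [InnerProductSpace ℂ HT] [CompleteSpace HT]
    [NormedAddCommGroup Hφ] [InnerProductSpace ℂ Hφ]
    [NormedAddCommGroup HTφ] [InnerProductSpace ℂ HTφ] [CompleteSpace HTφ]
    (k : X → H) (T : TensorLike H H HT) (Δ : H →L[ℂ] HT)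
    (hΔ : ∀ x, Δ (k x) = T.tmul (k x) (k x))
    (φ : S → X) (kφ : S → Hφ)
    (Tφ : Hφ →L[ℂ] H) (hiso : ∀ f, ‖Tφ f‖ = ‖f‖)
    (hTφ : ∀ s, Tφ (kφ s) = k (φ s))
    (Tt : TensorLike Hφ Hφ HTφ) :
    ∃ Δφ : Hφ →L[ℂ] HTφ,
      (∀ s, Δφ (kφ s) = Tt.tmul (kφ s) (kφ s)) ∧ ‖Δφ‖ ≤ ‖Δ‖ := by
  let A : Hφ →ₗᵢ[ℂ] H := ⟨Tφ.toLinearMap, hiso⟩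
  obtain ⟨Q, hQ, hQtmul⟩ := Tt.exists_norm_le_one_apply_tmul_map T A A
  refine ⟨Q ∘L Δ ∘L Tφ, fun s => ?_, ?_⟩
  · have hA : A (kφ s) = k (φ s) := hTφ s
    rw [ContinuousLinearMap.comp_apply, ContinuousLinearMap.comp_apply, hTφ, hΔ, ← hA, hQtmul]
  · have hTφnorm : ‖Tφ‖ ≤ 1 := A.norm_toContinuousLinearMap_le
    calc ‖Q ∘L Δ ∘L Tφ‖ ≤ ‖Q‖ * (‖Δ‖ * ‖Tφ‖) :=
          (Q.opNorm_comp_le _).trans (by gcongr; exact Δ.opNorm_comp_le Tφ)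
      _ ≤ 1 * (‖Δ‖ * 1) := by gcongr
      _ = ‖Δ‖ := by ring

/-- the pullback `H(k∘φ)` of an RKHA along `φ : S → X` is an RKHA:
`(T_φ* ⊗ T_φ*) Δ T_φ` is a bounded operator sending `(k∘φ)_s` to
`(k∘φ)_s ⊗ (k∘φ)_s` (with norm at most `‖Δ‖`). -/
theorem stmt_6 {X S H HT Hφ HTφ : Type*}
    [NormedAddCommGroup H] [InnerProductSpace ℂ H] [CompleteSpace H]
    [NormedAddCommGroup HT] [InnerProductSpace ℂ HT] [CompleteSpace HT]
    [NormedAddCommGroup Hφ] [InnerProductSpace ℂ Hφ] [CompleteSpace Hφ]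
    [NormedAddCommGroup HTφ] [InnerProductSpace ℂ HTφ] [CompleteSpace HTφ]
    (k : X → H) (T : TensorLike H H HT) (Δ : H →L[ℂ] HT)
    (hΔ : ∀ x, Δ (k x) = T.tmul (k x) (k x))
    (φ : S → X) (kφ : S → Hφ)
    (hdense : Dense (Submodule.span ℂ (Set.range kφ) : Set Hφ))
    (Tφ : Hφ →L[ℂ] H) (hiso : ∀ f, ‖Tφ f‖ = ‖f‖)
    (hTφ : ∀ s, Tφ (kφ s) = k (φ s))
    (Tt : TensorLike Hφ Hφ HTφ) :
    ∃ Δφ : Hφ →L[ℂ] HTφ,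
      (∀ s, Δφ (kφ s) = Tt.tmul (kφ s) (kφ s)) ∧ ‖Δφ‖ ≤ ‖Δ‖ :=
  stmt_6_general k T Δ hΔ φ kφ Tφ hiso hTφ Tt
end
end

section
/- Let H be a unital RKHA and φ : S → X with pullback isometry T_φ : H(k∘φ) → H. Then T_φ*(1) is a multiplicative unit of H(k∘φ): for all f ∈ H(k∘φ), T_φ*(1) · f = f. -/
open scoped ComplexInnerProductSpace

noncomputable section

/-!
Pairing `T_φ*(1)` with a kernel section gives `⟪T_φ (kφ s), 1⟫ = ⟪k (φ s), 1⟫ = 1`, so by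
multiplicativity `T_φ*(1) · f` and `f` have the same inner product with every `kφ s`.
These span a dense subspace, hence the two vectors agree.
-/

theorem eq_of_inner_right_of_dense_span {𝕜 E ι : Type*} [RCLike 𝕜] [NormedAddCommGroup E]
    [InnerProductSpace 𝕜 E] {v : ι → E}
    (hv : Dense (Submodule.span 𝕜 (Set.range v) : Set E)) {x y : E}
    (h : ∀ i, inner 𝕜 (v i) x = inner 𝕜 (v i) y) : x = y := by
  rw [← sub_eq_zero]
  have hspan : Submodule.span 𝕜 (Set.range v) ≤ (𝕜 ∙ (x - y))ᗮ := by
    rw [Submodule.span_le]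
    rintro _ ⟨i, rfl⟩
    rw [SetLike.mem_coe, Submodule.mem_orthogonal_singleton_iff_inner_left, inner_sub_right,
      h, sub_self]
  exact hv.eq_zero_of_inner_right 𝕜 fun w hw =>
    Submodule.mem_orthogonal_singleton_iff_inner_left.mp (hspan hw)

theorem stmt_7_general {X S H Hφ : Type*}
    [NormedAddCommGroup H] [InnerProductSpace ℂ H] [CompleteSpace H]
    [NormedAddCommGroup Hφ] [InnerProductSpace ℂ Hφ] [CompleteSpace Hφ]
    (k : X → H) (one : H) (hone : ∀ x, ⟪k x, one⟫ = 1)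
    (φ : S → X) (kφ : S → Hφ)
    (hdense : Dense (Submodule.span ℂ (Set.range kφ) : Set Hφ))
    (Tφ : Hφ →L[ℂ] H)
    (hTφ : ∀ s, Tφ (kφ s) = k (φ s))
    (m : Hφ →L[ℂ] Hφ →L[ℂ] Hφ)
    (hm : ∀ f g s, ⟪kφ s, m f g⟫ = ⟪kφ s, f⟫ * ⟪kφ s, g⟫) :
    ∀ f : Hφ, m (ContinuousLinearMap.adjoint Tφ one) f = f := by
  intro f
  refine eq_of_inner_right_of_dense_span hdense fun s => ?_
  have hunit : ⟪kφ s, ContinuousLinearMap.adjoint Tφ one⟫ = 1 := by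
    rw [ContinuousLinearMap.adjoint_inner_right, hTφ, hone]
  rw [hm, hunit, one_mul]

/-- if `H` is a unital RKHA and `T_φ : H(k∘φ) → H` is the pullback isometry,
then `T_φ*(1)` is a multiplicative unit for the pullback: `T_φ*(1) · f = f`. -/
theorem stmt_7 {X S H Hφ : Type*}
    [NormedAddCommGroup H] [InnerProductSpace ℂ H] [CompleteSpace H]
    [NormedAddCommGroup Hφ] [InnerProductSpace ℂ Hφ] [CompleteSpace Hφ]
    (k : X → H) (one : H) (hone : ∀ x, ⟪k x, one⟫ = 1)
    (φ : S → X) (kφ : S → Hφ)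
    (hdense : Dense (Submodule.span ℂ (Set.range kφ) : Set Hφ))
    (Tφ : Hφ →L[ℂ] H) (hiso : ∀ f, ‖Tφ f‖ = ‖f‖)
    (hTφ : ∀ s, Tφ (kφ s) = k (φ s))
    (m : Hφ →L[ℂ] Hφ →L[ℂ] Hφ)
    (hm : ∀ f g s, ⟪kφ s, m f g⟫ = ⟪kφ s, f⟫ * ⟪kφ s, g⟫) :
    ∀ f : Hφ, m (ContinuousLinearMap.adjoint Tφ one) f = f :=
  stmt_7_general k one hone φ kφ hdense Tφ hTφ m hm
end
end

section
/- Let T : H₁ → H₂ be a bounded operator between RKHAs mapping kernel sections to kernel sections, i.e. T(k¹_x) = k²_{F(x)} for some F : X₁ → X₂. Then Δ₂ T = (T ⊗ T) Δ₁, and consequently T* : H₂ → H₁ is multiplicative: T*(fg) = T*(f)T*(g) for all f,g ∈ H₂. -/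
open scoped ComplexInnerProductSpace

noncomputable section

lemma dense_eq {H : Type*} [NormedAddCommGroup H] [InnerProductSpace ℂ H] {s : Set H}
    (hs : Dense (Submodule.span ℂ s : Set H)) {u v : H}
    (h : ∀ x ∈ s, ⟪x, u⟫ = ⟪x, v⟫) : u = v := by
  have key : innerSL ℂ (u - v) = (0 : H →L[ℂ] ℂ) := by
    apply ContinuousLinearMap.ext_on hs
    intro x hx
    have h1 : ⟪x, u - v⟫ = 0 := by rw [inner_sub_right, h x hx]; ring
    have h2 : ⟪u - v, x⟫ = 0 := by
      rw [← inner_conj_symm, h1]; simp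
    simpa [inner_sub_left] using h2
  have h3 := congrArg (fun f => f (u - v)) key
  simp only [innerSL_apply_apply, ContinuousLinearMap.zero_apply] at h3
  exact sub_eq_zero.mp (inner_self_eq_zero.mp h3)

/-- a bounded operator between RKHAs mapping kernel sections to kernel
sections intertwines the comultiplications, `Δ₂ T = (T ⊗ T) Δ₁`, and its adjoint is
multiplicative: `T*(fg) = T*(f) T*(g)`. -/
theorem stmt_8 {X₁ X₂ H₁ H₂ T₁ T₂ : Type*}
    [NormedAddCommGroup H₁] [InnerProductSpace ℂ H₁] [CompleteSpace H₁]
    [NormedAddCommGroup H₂] [InnerProductSpace ℂ H₂] [CompleteSpace H₂]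
    [NormedAddCommGroup T₁] [InnerProductSpace ℂ T₁] [CompleteSpace T₁]
    [NormedAddCommGroup T₂] [InnerProductSpace ℂ T₂] [CompleteSpace T₂]
    (k₁ : X₁ → H₁) (hdense : Dense (Submodule.span ℂ (Set.range k₁) : Set H₁))
    (k₂ : X₂ → H₂)
    (t₁ : TensorLike H₁ H₁ T₁) (t₂ : TensorLike H₂ H₂ T₂)
    (Δ₁ : H₁ →L[ℂ] T₁) (hΔ₁ : ∀ x, Δ₁ (k₁ x) = t₁.tmul (k₁ x) (k₁ x))
    (Δ₂ : H₂ →L[ℂ] T₂) (hΔ₂ : ∀ y, Δ₂ (k₂ y) = t₂.tmul (k₂ y) (k₂ y))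
    (F : X₁ → X₂) (T : H₁ →L[ℂ] H₂) (hT : ∀ x, T (k₁ x) = k₂ (F x))
    (TT : T₁ →L[ℂ] T₂) (hTT : ∀ a b, TT (t₁.tmul a b) = t₂.tmul (T a) (T b)) :
    Δ₂.comp T = TT.comp Δ₁ ∧
    ∀ f g : H₂,
      ContinuousLinearMap.adjoint T (ContinuousLinearMap.adjoint Δ₂ (t₂.tmul f g)) =
        ContinuousLinearMap.adjoint Δ₁
          (t₁.tmul (ContinuousLinearMap.adjoint T f) (ContinuousLinearMap.adjoint T g)) := by
  constructor
  · apply ContinuousLinearMap.ext_on hdense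
    rintro _ ⟨x, rfl⟩
    simp only [ContinuousLinearMap.comp_apply, hT, hΔ₂, hΔ₁, hTT, hT]
  · intro f g
    apply dense_eq hdense
    rintro _ ⟨x, rfl⟩
    rw [ContinuousLinearMap.adjoint_inner_right, ContinuousLinearMap.adjoint_inner_right,
      ContinuousLinearMap.adjoint_inner_right, hT x, hΔ₂, hΔ₁, t₂.inner_tmul, t₁.inner_tmul,
      ContinuousLinearMap.adjoint_inner_right, ContinuousLinearMap.adjoint_inner_right, hT x]
end
end

section
/- Let H be an RKHA. A bounded linear functional χ on H, represented as χ(f) = ⟨f, ξ_χ⟩ via Riesz representation, is multiplicative (χ(fg) = χ(f)χ(g) for all f,g ∈ H) if and only if Δ(ξ_χ) = ξ_χ ⊗ ξ_χ. Hence the spectrum of H (nonzero multiplicative functionals) is in bijection with the cospectrum {ξ ∈ H\{0} : Δ(ξ) = ξ ⊗ ξ}, and this bijection is a homeomorphism for the weak-* and weak topologies. -/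
/-! By the adjoint, `⟪ξ, Δ* (f ⊗ g)⟫ = ⟪ξ, f⟫ ⟪ξ, g⟫` says `⟪Δ ξ, f ⊗ g⟫ = ⟪ξ ⊗ ξ, f ⊗ g⟫`, and
elementary tensors span a dense subspace, so multiplicativity of `⟪ξ, ·⟫` is `Δ ξ = ξ ⊗ ξ`.
The Riesz map is a homeomorphism from the weak-* to the weak topology, since the evaluations
defining either topology are complex conjugates of those defining the other; it therefore
restricts to a homeomorphism from the spectrum onto the cospectrum. -/

open scoped ComplexInnerProductSpace

noncomputable section

namespace TensorLike

variable {H K HT : Type*} [NormedAddCommGroup H] [InnerProductSpace ℂ H]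
  [NormedAddCommGroup K] [InnerProductSpace ℂ K] [NormedAddCommGroup HT] [InnerProductSpace ℂ HT]

theorem ext_inner_tmul (T : TensorLike H K HT) {x y : HT}
    (h : ∀ a b, ⟪x, T.tmul a b⟫ = ⟪y, T.tmul a b⟫) : x = y := by
  have hxy : innerSL ℂ x = innerSL ℂ y :=
    ContinuousLinearMap.ext_on T.dense_span (by rintro _ ⟨⟨a, b⟩, rfl⟩; exact h a b)
  exact ext_inner_right ℂ fun v => DFunLike.congr_fun hxy v

theorem inner_adjoint_tmul_eq_mul_iff [CompleteSpace H] [CompleteSpace HT]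
    (T : TensorLike H H HT) (Δ : H →L[ℂ] HT) (ξ : H) :
    (∀ f g : H, ⟪ξ, ContinuousLinearMap.adjoint Δ (T.tmul f g)⟫ = ⟪ξ, f⟫ * ⟪ξ, g⟫) ↔
      Δ ξ = T.tmul ξ ξ := by
  simp only [ContinuousLinearMap.adjoint_inner_right, ← T.inner_tmul]
  exact ⟨T.ext_inner_tmul, fun h f g => by rw [h]⟩

end TensorLike

namespace InnerProductSpace

variable {𝕜 E : Type*} [RCLike 𝕜] [NormedAddCommGroup E] [InnerProductSpace 𝕜 E] [CompleteSpace E]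

open scoped InnerProductSpace ComplexConjugate

def weakDualHomeomorphWeakSpace : WeakDual 𝕜 E ≃ₜ WeakSpace 𝕜 E where
  toFun χ := toWeakSpace 𝕜 E ((toDual 𝕜 E).symm (WeakDual.toStrongDual χ))
  invFun x := StrongDual.toWeakDual (toDual 𝕜 E ((toWeakSpace 𝕜 E).symm x))
  left_inv χ := (toDual 𝕜 E).apply_symm_apply χ
  right_inv x := congrArg (toWeakSpace 𝕜 E) ((toDual 𝕜 E).symm_apply_apply _)
  continuous_toFun := by
    refine WeakBilin.continuous_of_continuous_eval _ fun l => ?_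
    refine (RCLike.continuous_conj.comp (WeakDual.eval_continuous ((toDual 𝕜 E).symm l))).congr
      fun χ => ?_
    change conj (χ _) = l ((toDual 𝕜 E).symm (WeakDual.toStrongDual χ))
    rw [← toDual_symm_apply, ← WeakDual.toStrongDual_apply, ← toDual_symm_apply, inner_conj_symm]
  continuous_invFun := by
    refine WeakDual.continuous_of_continuous_eval fun y => ?_
    refine (RCLike.continuous_conj.comp (WeakBilin.eval_continuous _ (toDual 𝕜 E y))).congr
      fun x => ?_
    change conj (toDual 𝕜 E y ((toWeakSpace 𝕜 E).symm x)) =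
      toDual 𝕜 E ((toWeakSpace 𝕜 E).symm x) y
    rw [toDual_apply_apply, toDual_apply_apply, inner_conj_symm]

theorem exists_homeomorph_subtype_weakDual {P : WeakDual 𝕜 E → Prop} {Q : E → Prop}
    (hPQ : ∀ χ, P χ ↔ Q ((toDual 𝕜 E).symm (WeakDual.toStrongDual χ))) :
    letI : TopologicalSpace {x : E // Q x} :=
      TopologicalSpace.induced (fun x => toWeakSpace 𝕜 E x.1) inferInstance
    ∃ e : {χ // P χ} ≃ₜ {x : E // Q x}, ∀ χ f, χ.1 f = ⟪(e χ : E), f⟫_𝕜 := by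
  let : TopologicalSpace {x : E // Q x} :=
    TopologicalSpace.induced (fun x => toWeakSpace 𝕜 E x.1) inferInstance
  let e : WeakDual 𝕜 E ≃ₜ WeakSpace 𝕜 E := weakDualHomeomorphWeakSpace
  let ψ : {χ // P χ} ≃ {x : E // Q x} :=
    (e.toEquiv.trans (toWeakSpace 𝕜 E).symm.toEquiv).subtypeEquiv hPQ
  refine ⟨⟨ψ, ?_, ?_⟩, fun χ f => toDual_symm_apply.symm⟩
  · exact continuous_induced_rng.2 (e.continuous.comp continuous_subtype_val)
  · exact (e.symm.continuous.comp continuous_induced_dom).subtype_mk _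

end InnerProductSpace

/-- a bounded functional `χ = ⟪ξ_χ, ·⟫` on an RKHA is multiplicative iff
`Δ ξ_χ = ξ_χ ⊗ ξ_χ`; hence the spectrum (nonzero multiplicative functionals with the
weak-* topology) is homeomorphic to the cospectrum (with the weak topology). -/
theorem stmt_9 {H HT : Type*}
    [NormedAddCommGroup H] [InnerProductSpace ℂ H] [CompleteSpace H]
    [NormedAddCommGroup HT] [InnerProductSpace ℂ HT] [CompleteSpace HT]
    (T : TensorLike H H HT) (Δ : H →L[ℂ] HT) :
    (∀ ξ : H,
      (∀ f g : H, ⟪ξ, ContinuousLinearMap.adjoint Δ (T.tmul f g)⟫ = ⟪ξ, f⟫ * ⟪ξ, g⟫) ↔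
        Δ ξ = T.tmul ξ ξ) ∧
    (letI : TopologicalSpace {ξ : H // ξ ≠ 0 ∧ Δ ξ = T.tmul ξ ξ} :=
      TopologicalSpace.induced (fun ξ => toWeakSpace ℂ H ξ.1) inferInstance
     ∃ e : {χ : WeakDual ℂ H // χ ≠ 0 ∧ ∀ f g : H,
              χ (ContinuousLinearMap.adjoint Δ (T.tmul f g)) = χ f * χ g} ≃ₜ
            {ξ : H // ξ ≠ 0 ∧ Δ ξ = T.tmul ξ ξ},
       ∀ (χ : {χ : WeakDual ℂ H // χ ≠ 0 ∧ ∀ f g : H,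
              χ (ContinuousLinearMap.adjoint Δ (T.tmul f g)) = χ f * χ g}) (f : H),
         χ.1 f = ⟪((e χ : {ξ : H // ξ ≠ 0 ∧ Δ ξ = T.tmul ξ ξ}) : H), f⟫) := by
  refine ⟨T.inner_adjoint_tmul_eq_mul_iff Δ, InnerProductSpace.exists_homeomorph_subtype_weakDual
    fun χ => ?_⟩
  rw [← T.inner_adjoint_tmul_eq_mul_iff Δ]
  simp only [InnerProductSpace.toDual_symm_apply, ne_eq, LinearIsometryEquiv.map_eq_zero_iff]
  rfl
end
end

section
/- Let H ⊂ L(X) be a nonunital RKHA with comultiplication Δ. Define the unitalization H̃ = ℂ ⊕ H as an RKHS on X ∪ {∞} with kernel k̃(x,y) = 1 + k(x,y) for x,y ∈ X and k̃(x,y) = 1 otherwise. Then the map k̃_x ↦ k̃_x ⊗ k̃_x extends to a bounded operator Δ̃ on H̃, given by Δ̃(a ⊕ f) = a(1⊗1) ⊕ (1 ⊗ f) ⊕ (f ⊗ 1) ⊕ Δ(f) under the identification H̃ ⊗ H̃ ≅ ℂ ⊕ (ℂ ⊗ H) ⊕ (H ⊗ ℂ) ⊕ (H ⊗ H). Hence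 H̃ is a unital RKHA. -/
/-! The comultiplication of `H̃ = ℂ ⊕ H` is the map `a ⊕ f ↦ a ⊕ f ⊕ f ⊕ Δ f`; with respect to the
ℓ²-norms on both sides its squared norm is `|a|² + 2‖f‖² + ‖Δ f‖² ≤ (2 + ‖Δ‖)² (|a|² + ‖f‖²)`,
so it is bounded, and on kernel sections it is `k̃ ↦ k̃ ⊗ k̃` by the bilinearity of the tensor
product on `ℂ ⊕ H`. -/

open scoped ComplexInnerProductSpace

noncomputable section

section Unitalization

variable {H HT Hu HuT : Type*}
  [NormedAddCommGroup H] [InnerProductSpace ℂ H]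
  [NormedAddCommGroup HT] [InnerProductSpace ℂ HT]
  [NormedAddCommGroup Hu] [InnerProductSpace ℂ Hu]
  [NormedAddCommGroup HuT] [InnerProductSpace ℂ HuT]

lemma norm_sq_of_inner_eq_conj_mul_add {E : Type*} [NormedAddCommGroup E] [InnerProductSpace ℂ E]
    {u : E} {a : ℂ} {r : ℝ} (h : ⟪u, u⟫ = starRingEnd ℂ a * a + r) :
    ‖u‖ ^ 2 = ‖a‖ ^ 2 + r := by
  rw [inner_self_eq_norm_sq_to_K, ← Complex.normSq_eq_conj_mul_self, ← Complex.sq_norm] at h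
  simp only [RCLike.ofReal_eq_complex_ofReal] at h
  exact_mod_cast h

lemma norm_sq_of_inner_prod (P : (ℂ × H) ≃ₗ[ℂ] Hu)
    (hP : ∀ (a b : ℂ) (f g : H), ⟪P (a, f), P (b, g)⟫ = (starRingEnd ℂ) a * b + ⟪f, g⟫)
    (u : Hu) : ‖u‖ ^ 2 = ‖(P.symm u).1‖ ^ 2 + ‖(P.symm u).2‖ ^ 2 := by
  apply norm_sq_of_inner_eq_conj_mul_add
  conv_lhs => rw [← P.apply_symm_apply u]
  rw [hP, inner_self_eq_norm_sq_to_K, RCLike.ofReal_eq_complex_ofReal, Complex.ofReal_pow]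

lemma norm_sq_of_inner_prod₄ (Q : (ℂ × (H × (H × HT))) ≃ₗ[ℂ] HuT)
    (hQ : ∀ (a b : ℂ) (f₁ g₁ f₂ g₂ : H) (s t : HT),
      ⟪Q (a, (f₁, (f₂, s))), Q (b, (g₁, (g₂, t)))⟫ =
        (starRingEnd ℂ) a * b + ⟪f₁, g₁⟫ + ⟪f₂, g₂⟫ + ⟪s, t⟫)
    (a : ℂ) (f₁ f₂ : H) (s : HT) :
    ‖Q (a, (f₁, (f₂, s)))‖ ^ 2 = ‖a‖ ^ 2 + (‖f₁‖ ^ 2 + ‖f₂‖ ^ 2 + ‖s‖ ^ 2) := by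
  apply norm_sq_of_inner_eq_conj_mul_add
  simp only [hQ, inner_self_eq_norm_sq_to_K, RCLike.ofReal_eq_complex_ofReal]
  push_cast
  ring

def unitalComulₗ (Δ : H →L[ℂ] HT) (P : (ℂ × H) ≃ₗ[ℂ] Hu) (Q : (ℂ × (H × (H × HT))) ≃ₗ[ℂ] HuT) :
    Hu →ₗ[ℂ] HuT :=
  (Q : (ℂ × (H × (H × HT))) →ₗ[ℂ] HuT) ∘ₗ
    (LinearMap.fst ℂ ℂ H).prod ((LinearMap.snd ℂ ℂ H).prod
      ((LinearMap.snd ℂ ℂ H).prod ((Δ : H →ₗ[ℂ] HT) ∘ₗ LinearMap.snd ℂ ℂ H))) ∘ₗ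
    (P.symm : Hu →ₗ[ℂ] ℂ × H)

@[simp]
lemma unitalComulₗ_apply (Δ : H →L[ℂ] HT) (P : (ℂ × H) ≃ₗ[ℂ] Hu)
    (Q : (ℂ × (H × (H × HT))) ≃ₗ[ℂ] HuT) (a : ℂ) (f : H) :
    unitalComulₗ Δ P Q (P (a, f)) = Q (a, (f, (f, Δ f))) := by
  simp [unitalComulₗ]

lemma norm_unitalComulₗ_le (Δ : H →L[ℂ] HT) (P : (ℂ × H) ≃ₗ[ℂ] Hu)
    (hP : ∀ (a b : ℂ) (f g : H), ⟪P (a, f), P (b, g)⟫ = (starRingEnd ℂ) a * b + ⟪f, g⟫)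
    (Q : (ℂ × (H × (H × HT))) ≃ₗ[ℂ] HuT)
    (hQ : ∀ (a b : ℂ) (f₁ g₁ f₂ g₂ : H) (s t : HT),
      ⟪Q (a, (f₁, (f₂, s))), Q (b, (g₁, (g₂, t)))⟫ =
        (starRingEnd ℂ) a * b + ⟪f₁, g₁⟫ + ⟪f₂, g₂⟫ + ⟪s, t⟫)
    (u : Hu) : ‖unitalComulₗ Δ P Q u‖ ≤ (2 + ‖Δ‖) * ‖u‖ := by
  obtain ⟨⟨a, f⟩, rfl⟩ := P.surjective u
  have hΔf : ‖Δ f‖ ≤ ‖Δ‖ * ‖f‖ := Δ.le_opNorm f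
  have hsq : ‖unitalComulₗ Δ P Q (P (a, f))‖ ^ 2 ≤ ((2 + ‖Δ‖) * ‖P (a, f)‖) ^ 2 := by
    rw [unitalComulₗ_apply, norm_sq_of_inner_prod₄ Q hQ, mul_pow, norm_sq_of_inner_prod P hP,
      LinearEquiv.symm_apply_apply]
    dsimp only
    have hΔf2 := pow_le_pow_left₀ (norm_nonneg _) hΔf 2
    rw [mul_pow] at hΔf2
    nlinarith [mul_nonneg (norm_nonneg Δ) (sq_nonneg ‖a‖), mul_nonneg (norm_nonneg Δ) (sq_nonneg ‖f‖),
      mul_nonneg (sq_nonneg ‖Δ‖) (sq_nonneg ‖a‖), sq_nonneg ‖a‖, sq_nonneg ‖f‖]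
  exact le_of_sq_le_sq (by simpa [mul_pow] using hsq) (by positivity)

def unitalComul (Δ : H →L[ℂ] HT) (P : (ℂ × H) ≃ₗ[ℂ] Hu)
    (hP : ∀ (a b : ℂ) (f g : H), ⟪P (a, f), P (b, g)⟫ = (starRingEnd ℂ) a * b + ⟪f, g⟫)
    (Q : (ℂ × (H × (H × HT))) ≃ₗ[ℂ] HuT)
    (hQ : ∀ (a b : ℂ) (f₁ g₁ f₂ g₂ : H) (s t : HT),
      ⟪Q (a, (f₁, (f₂, s))), Q (b, (g₁, (g₂, t)))⟫ =
        (starRingEnd ℂ) a * b + ⟪f₁, g₁⟫ + ⟪f₂, g₂⟫ + ⟪s, t⟫) :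
    Hu →L[ℂ] HuT :=
  (unitalComulₗ Δ P Q).mkContinuous (2 + ‖Δ‖) (norm_unitalComulₗ_le Δ P hP Q hQ)

@[simp]
lemma unitalComul_apply (Δ : H →L[ℂ] HT) (P : (ℂ × H) ≃ₗ[ℂ] Hu)
    (hP : ∀ (a b : ℂ) (f g : H), ⟪P (a, f), P (b, g)⟫ = (starRingEnd ℂ) a * b + ⟪f, g⟫)
    (Q : (ℂ × (H × (H × HT))) ≃ₗ[ℂ] HuT)
    (hQ : ∀ (a b : ℂ) (f₁ g₁ f₂ g₂ : H) (s t : HT),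
      ⟪Q (a, (f₁, (f₂, s))), Q (b, (g₁, (g₂, t)))⟫ =
        (starRingEnd ℂ) a * b + ⟪f₁, g₁⟫ + ⟪f₂, g₂⟫ + ⟪s, t⟫)
    (a : ℂ) (f : H) : unitalComul Δ P hP Q hQ (P (a, f)) = Q (a, (f, (f, Δ f))) := by
  rw [unitalComul, LinearMap.mkContinuous_apply, unitalComulₗ_apply]

end Unitalization

theorem stmt_12_general {X H HT Hu HuT : Type*}
    [NormedAddCommGroup H] [InnerProductSpace ℂ H]
    [NormedAddCommGroup HT] [InnerProductSpace ℂ HT]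
    [NormedAddCommGroup Hu] [InnerProductSpace ℂ Hu]
    [NormedAddCommGroup HuT] [InnerProductSpace ℂ HuT]
    (k : X → H) (T : TensorLike H H HT) (Δ : H →L[ℂ] HT)
    (hΔ : ∀ x, Δ (k x) = T.tmul (k x) (k x))
    (P : (ℂ × H) ≃ₗ[ℂ] Hu)
    (hP : ∀ (a b : ℂ) (f g : H),
      ⟪P (a, f), P (b, g)⟫ = (starRingEnd ℂ) a * b + ⟪f, g⟫)
    (Q : (ℂ × (H × (H × HT))) ≃ₗ[ℂ] HuT)
    (hQ : ∀ (a b : ℂ) (f₁ g₁ f₂ g₂ : H) (s t : HT),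
      ⟪Q (a, (f₁, (f₂, s))), Q (b, (g₁, (g₂, t)))⟫ =
        (starRingEnd ℂ) a * b + ⟪f₁, g₁⟫ + ⟪f₂, g₂⟫ + ⟪s, t⟫)
    (Tu : TensorLike Hu Hu HuT)
    (hTu : ∀ (a b : ℂ) (f g : H),
      Tu.tmul (P (a, f)) (P (b, g)) = Q (a * b, (a • g, (b • f, T.tmul f g)))) :
    ∃ Δt : Hu →L[ℂ] HuT,
      (∀ x : X, Δt (P (1, k x)) = Tu.tmul (P (1, k x)) (P (1, k x))) ∧
      (Δt (P (1, 0)) = Tu.tmul (P (1, 0)) (P (1, 0))) ∧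
      (∀ (a : ℂ) (f : H), Δt (P (a, f)) = Q (a, (f, (f, Δ f)))) ∧
      (∀ x : X, ⟪P (1, k x), P (1, 0)⟫ = 1) := by
  refine ⟨unitalComul Δ P hP Q hQ, fun x => ?_, ?_, unitalComul_apply Δ P hP Q hQ, fun x => ?_⟩
  · rw [unitalComul_apply, hTu, hΔ, one_mul, one_smul]
  · rw [unitalComul_apply, hTu, map_zero, map_zero, one_mul, smul_zero]
  · simp [hP]

/-- the unitalization `H̃ = ℂ ⊕ H` of a nonunital RKHA (realized as a
Hilbert space `Hu` via a linear isomorphism `P` with the ℓ²-direct-sum inner product),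
with kernel `k̃_x = P(1, k_x)`, `k̃_∞ = P(1, 0)`, and tensor square realized via `Q` as
`ℂ ⊕ (ℂ⊗H) ⊕ (H⊗ℂ) ⊕ (H⊗H)`, has a bounded comultiplication
`Δ̃ (P(a,f)) = Q(a, (f, (f, Δ f)))` extending `k̃ ↦ k̃ ⊗ k̃`, and `P(1,0)` is a unit
(pairs to 1 with every kernel section). -/
theorem stmt_12 {X H HT Hu HuT : Type*}
    [NormedAddCommGroup H] [InnerProductSpace ℂ H] [CompleteSpace H]
    [NormedAddCommGroup HT] [InnerProductSpace ℂ HT] [CompleteSpace HT]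
    [NormedAddCommGroup Hu] [InnerProductSpace ℂ Hu] [CompleteSpace Hu]
    [NormedAddCommGroup HuT] [InnerProductSpace ℂ HuT] [CompleteSpace HuT]
    (k : X → H) (T : TensorLike H H HT) (Δ : H →L[ℂ] HT)
    (hΔ : ∀ x, Δ (k x) = T.tmul (k x) (k x))
    (hnonunital : ¬∃ one : H, ∀ x, ⟪k x, one⟫ = 1)
    (P : (ℂ × H) ≃ₗ[ℂ] Hu)
    (hP : ∀ (a b : ℂ) (f g : H),
      ⟪P (a, f), P (b, g)⟫ = (starRingEnd ℂ) a * b + ⟪f, g⟫)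
    (Q : (ℂ × (H × (H × HT))) ≃ₗ[ℂ] HuT)
    (hQ : ∀ (a b : ℂ) (f₁ g₁ f₂ g₂ : H) (s t : HT),
      ⟪Q (a, (f₁, (f₂, s))), Q (b, (g₁, (g₂, t)))⟫ =
        (starRingEnd ℂ) a * b + ⟪f₁, g₁⟫ + ⟪f₂, g₂⟫ + ⟪s, t⟫)
    (Tu : TensorLike Hu Hu HuT)
    (hTu : ∀ (a b : ℂ) (f g : H),
      Tu.tmul (P (a, f)) (P (b, g)) = Q (a * b, (a • g, (b • f, T.tmul f g)))) :
    ∃ Δt : Hu →L[ℂ] HuT,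
      (∀ x : X, Δt (P (1, k x)) = Tu.tmul (P (1, k x)) (P (1, k x))) ∧
      (Δt (P (1, 0)) = Tu.tmul (P (1, 0)) (P (1, 0))) ∧
      (∀ (a : ℂ) (f : H), Δt (P (a, f)) = Q (a, (f, (f, Δ f)))) ∧
      (∀ x : X, ⟪P (1, k x), P (1, 0)⟫ = 1) :=
  stmt_12_general k T Δ hΔ P hP Q hQ Tu hTu
end
end

section
/- Let H be a nonunital RKHA with unitalization H̃. The spectrum of H̃ is the one-point compactification of the spectrum of H: σ(H̃) = {⟨·,1⟩ + χ ∘ p_H : χ ∈ σ(H)} ∪ {⟨·,1⟩}, where p_H is the orthogonal projection onto H, and the map Ψ(χ) = ⟨·,1⟩ + χ ∘ p_H is a homeomorphism of σ(H) onto its image in σ(H̃). -/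
/-!
A character `μ` of `H̃` takes the value `1` at the unit `P (1, 0)`, so
`μ (P (a, f)) = a + μ (P (0, f))`, and `f ↦ μ (P (0, f))` is multiplicative on `H`: either it
vanishes, and `μ` is the point at infinity `P (a, f) ↦ a`, or it is a character `χ` of `H` and
`μ = Ψ χ`. Restriction to `H` is weak-* continuous and a left inverse of `Ψ`, so `Ψ` is an
embedding.
-/

open scoped ComplexInnerProductSpace

noncomputable section

section Character

variable {𝕜 E : Type*} [NontriviallyNormedField 𝕜] [NormedAddCommGroup E] [NormedSpace 𝕜 E]

/-- The spectrum `σ` for an arbitrary continuous bilinear product `m`. -/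
abbrev Character (m : E →L[𝕜] E →L[𝕜] E) : Type _ :=
  {χ : WeakDual 𝕜 E // χ ≠ 0 ∧ ∀ f g, χ (m f g) = χ f * χ g}

theorem Character.apply_eq_one_of_mul_left_eq {m : E →L[𝕜] E →L[𝕜] E} (χ : Character m)
    {e : E} (he : ∀ u, m e u = u) : χ.1 e = 1 := by
  obtain ⟨u, hu⟩ : ∃ u, χ.1 u ≠ 0 := by
    by_contra! h
    exact χ.2.1 (DFunLike.ext _ _ h)
  have h := χ.2.2 e u
  rw [he] at h
  exact (mul_eq_right₀ hu).mp h.symm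

end Character

namespace UnitalExtension

section

variable {𝕜 H Hu : Type*} [NontriviallyNormedField 𝕜]
  [NormedAddCommGroup H] [NormedSpace 𝕜 H] [NormedAddCommGroup Hu] [NormedSpace 𝕜 Hu]
  {mH : H →L[𝕜] H →L[𝕜] H} {mU : Hu →L[𝕜] Hu →L[𝕜] Hu} (P : (𝕜 × H) ≃L[𝕜] Hu)
  (hmU : ∀ (a b : 𝕜) (f g : H), mU (P (a, f)) (P (b, g)) = P (a * b, a • g + b • f + mH f g))

include hmU in
theorem mul_one_left (u : Hu) : mU (P (1, 0)) u = u := by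
  obtain ⟨⟨b, g⟩, rfl⟩ := P.surjective u
  simp [hmU]

/-- `Ψ χ = ⟨·, 1⟩ + χ ∘ p_H`. -/
def extendDual (χ : WeakDual 𝕜 H) : WeakDual 𝕜 Hu :=
  (ContinuousLinearMap.fst 𝕜 𝕜 H + χ.comp (ContinuousLinearMap.snd 𝕜 𝕜 H)).comp
    (P.symm : Hu →L[𝕜] 𝕜 × H)

@[simp]
theorem extendDual_apply (χ : WeakDual 𝕜 H) (a : 𝕜) (f : H) :
    extendDual P χ (P (a, f)) = a + χ f := by
  change (P.symm (P (a, f))).1 + χ (P.symm (P (a, f))).2 = _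
  simp

def restrictDual (μ : WeakDual 𝕜 Hu) : WeakDual 𝕜 H :=
  μ.comp ((P : 𝕜 × H →L[𝕜] Hu).comp (ContinuousLinearMap.inr 𝕜 𝕜 H))

@[simp]
theorem restrictDual_apply (μ : WeakDual 𝕜 Hu) (f : H) : restrictDual P μ f = μ (P (0, f)) :=
  rfl

theorem continuous_extendDual : Continuous (extendDual P) :=
  WeakDual.continuous_of_continuous_eval fun u =>
    continuous_const.add (WeakDual.eval_continuous (P.symm u).2)

theorem continuous_restrictDual : Continuous (restrictDual P) :=
  WeakDual.continuous_of_continuous_eval fun f => WeakDual.eval_continuous (P (0, f))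

theorem restrictDual_extendDual (χ : WeakDual 𝕜 H) : restrictDual P (extendDual P χ) = χ :=
  DFunLike.ext _ _ fun f => by simp

include hmU in
theorem extendDual_mem (χ : Character mH) :
    extendDual P χ.1 ≠ 0 ∧ ∀ u v, extendDual P χ.1 (mU u v) =
      extendDual P χ.1 u * extendDual P χ.1 v := by
  refine ⟨fun h => ?_, fun u v => ?_⟩
  · have h1 : extendDual P χ.1 (P (1, 0)) = 0 := by rw [h]; rfl
    simp at h1
  · obtain ⟨⟨a, f⟩, rfl⟩ := P.surjective u
    obtain ⟨⟨b, g⟩, rfl⟩ := P.surjective v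
    simp only [hmU, extendDual_apply, map_add, map_smul, χ.2.2, smul_eq_mul]
    ring

def extend (χ : Character mH) : Character mU :=
  ⟨extendDual P χ.1, extendDual_mem P hmU χ⟩

theorem extend_apply (χ : Character mH) (a : 𝕜) (f : H) :
    (extend P hmU χ).1 (P (a, f)) = a + χ.1 f :=
  extendDual_apply P χ.1 a f

theorem isEmbedding_extend : Topology.IsEmbedding (extend P hmU) := by
  refine .of_comp (((continuous_extendDual P).comp continuous_subtype_val).subtype_mk _)
    ((continuous_restrictDual P).comp continuous_subtype_val) ?_
  convert Topology.IsEmbedding.subtypeVal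
  ext1 χ
  exact restrictDual_extendDual P χ.1

include hmU in
theorem apply_eq_add_restrictDual (μ : Character mU) (a : 𝕜) (f : H) :
    μ.1 (P (a, f)) = a + restrictDual P μ.1 f := by
  have hdecomp : P (a, f) = a • P (1, 0) + P (0, f) := by
    rw [← map_smul, ← map_add]
    simp
  rw [hdecomp, map_add, map_smul, μ.apply_eq_one_of_mul_left_eq (mul_one_left P hmU)]
  simp

include hmU in
theorem restrictDual_mul (μ : Character mU) (f g : H) :
    restrictDual P μ.1 (mH f g) = restrictDual P μ.1 f * restrictDual P μ.1 g := by
  simpa [hmU] using μ.2.2 (P (0, f)) (P (0, g))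

theorem exists_extend_eq_or_eq_fst (μ : Character mU) :
    (∃ χ, extend P hmU χ = μ) ∨ ∀ (a : 𝕜) (f : H), μ.1 (P (a, f)) = a := by
  by_cases h0 : restrictDual P μ.1 = 0
  · right
    intro a f
    rw [apply_eq_add_restrictDual P hmU, h0]
    exact add_zero a
  · left
    refine ⟨⟨restrictDual P μ.1, h0, restrictDual_mul P hmU μ⟩, Subtype.ext ?_⟩
    refine DFunLike.ext _ _ fun u => ?_
    obtain ⟨⟨a, f⟩, rfl⟩ := P.surjective u
    exact (extendDual_apply P _ a f).trans (apply_eq_add_restrictDual P hmU μ a f).symm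

end

section

variable {H Hu : Type*} [NormedAddCommGroup H] [InnerProductSpace ℂ H]
  [NormedAddCommGroup Hu] [InnerProductSpace ℂ Hu] (P : (ℂ × H) ≃ₗ[ℂ] Hu)
  (hP : ∀ (a b : ℂ) (f g : H), ⟪P (a, f), P (b, g)⟫ = (starRingEnd ℂ) a * b + ⟪f, g⟫)

include hP in
theorem norm_sq_apply (a : ℂ) (f : H) : ‖P (a, f)‖ ^ 2 = ‖a‖ ^ 2 + ‖f‖ ^ 2 := by
  have h := hP a a f f
  rw [inner_self_eq_norm_sq_to_K, inner_self_eq_norm_sq_to_K, Complex.conj_mul'] at h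
  apply Complex.ofReal_injective
  push_cast
  exact h

include hP in
theorem norm_apply_le (x : ℂ × H) : ‖P x‖ ≤ 2 * ‖x‖ := by
  obtain ⟨a, f⟩ := x
  refine (pow_le_pow_iff_left₀ (norm_nonneg _) (by positivity) two_ne_zero).mp ?_
  rw [norm_sq_apply P hP]
  nlinarith [norm_fst_le (a, f), norm_snd_le (a, f), norm_nonneg a, norm_nonneg f]

include hP in
theorem norm_symm_apply_le (u : Hu) : ‖P.symm u‖ ≤ 1 * ‖u‖ := by
  obtain ⟨⟨a, f⟩, rfl⟩ := P.surjective u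
  have h := norm_sq_apply P hP a f
  rw [one_mul, P.symm_apply_apply, Prod.norm_def, max_le_iff]
  constructor <;>
    refine (pow_le_pow_iff_left₀ (norm_nonneg _) (norm_nonneg _) two_ne_zero).mp ?_ <;>
    nlinarith [sq_nonneg ‖a‖, sq_nonneg ‖f‖]

/-- `P` is an isometry for the `ℓ²` norm on `ℂ × H`, hence a topological isomorphism. -/
def continuousEquivOfInner : (ℂ × H) ≃L[ℂ] Hu :=
  P.toContinuousLinearEquivOfBounds 2 1 (norm_apply_le P hP) (norm_symm_apply_le P hP)

end

end UnitalExtension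

theorem stmt_13_general {H Hu : Type*}
    [NormedAddCommGroup H] [InnerProductSpace ℂ H]
    [NormedAddCommGroup Hu] [InnerProductSpace ℂ Hu]
    (mH : H →L[ℂ] H →L[ℂ] H)
    (P : (ℂ × H) ≃ₗ[ℂ] Hu)
    (hP : ∀ (a b : ℂ) (f g : H),
      ⟪P (a, f), P (b, g)⟫ = (starRingEnd ℂ) a * b + ⟪f, g⟫)
    (mU : Hu →L[ℂ] Hu →L[ℂ] Hu)
    (hmU : ∀ (a b : ℂ) (f g : H),
      mU (P (a, f)) (P (b, g)) = P (a * b, a • g + b • f + mH f g)) :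
    ∃ Ψ : {χ : WeakDual ℂ H // χ ≠ 0 ∧ ∀ f g, χ (mH f g) = χ f * χ g} →
          {χ : WeakDual ℂ Hu // χ ≠ 0 ∧ ∀ u v, χ (mU u v) = χ u * χ v},
      (∀ χ (a : ℂ) (f : H), (Ψ χ).1 (P (a, f)) = a + χ.1 f) ∧
      Topology.IsEmbedding Ψ ∧
      (∀ μ : {χ : WeakDual ℂ Hu // χ ≠ 0 ∧ ∀ u v, χ (mU u v) = χ u * χ v},
        (∃ χ, Ψ χ = μ) ∨ ∀ (a : ℂ) (f : H), μ.1 (P (a, f)) = a) := by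
  let Pc := UnitalExtension.continuousEquivOfInner P hP
  exact ⟨UnitalExtension.extend Pc hmU, UnitalExtension.extend_apply Pc hmU,
    UnitalExtension.isEmbedding_extend Pc hmU, UnitalExtension.exists_extend_eq_or_eq_fst Pc hmU⟩

/-- the spectrum of the unitalization `H̃ = ℂ ⊕ H` (realized via `P`, with
multiplication `(a1⊕f)(b1⊕g) = ab1 ⊕ (ag + bf + fg)`) is the one-point compactification
of the spectrum of `H`: the map `Ψ(χ) = ⟨·,1⟩ + χ ∘ p_H` is a topological embedding of
`σ(H)` into `σ(H̃)`, and every character of `H̃` is either `Ψ(χ)` or the extra character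
`⟨·,1⟩ : P(a,f) ↦ a`. -/
theorem stmt_13 {H HT Hu : Type*}
    [NormedAddCommGroup H] [InnerProductSpace ℂ H] [CompleteSpace H]
    [NormedAddCommGroup HT] [InnerProductSpace ℂ HT] [CompleteSpace HT]
    [NormedAddCommGroup Hu] [InnerProductSpace ℂ Hu] [CompleteSpace Hu]
    (T : TensorLike H H HT) (Δ : H →L[ℂ] HT)
    (mH : H →L[ℂ] H →L[ℂ] H)
    (hmH : ∀ f g, mH f g = ContinuousLinearMap.adjoint Δ (T.tmul f g))
    (P : (ℂ × H) ≃ₗ[ℂ] Hu)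
    (hP : ∀ (a b : ℂ) (f g : H),
      ⟪P (a, f), P (b, g)⟫ = (starRingEnd ℂ) a * b + ⟪f, g⟫)
    (mU : Hu →L[ℂ] Hu →L[ℂ] Hu)
    (hmU : ∀ (a b : ℂ) (f g : H),
      mU (P (a, f)) (P (b, g)) = P (a * b, a • g + b • f + mH f g)) :
    ∃ Ψ : {χ : WeakDual ℂ H // χ ≠ 0 ∧ ∀ f g, χ (mH f g) = χ f * χ g} →
          {χ : WeakDual ℂ Hu // χ ≠ 0 ∧ ∀ u v, χ (mU u v) = χ u * χ v},
      (∀ χ (a : ℂ) (f : H), (Ψ χ).1 (P (a, f)) = a + χ.1 f) ∧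
      Topology.IsEmbedding Ψ ∧
      (∀ μ : {χ : WeakDual ℂ Hu // χ ≠ 0 ∧ ∀ u v, χ (mU u v) = χ u * χ v},
        (∃ χ, Ψ χ = μ) ∨ ∀ (a : ℂ) (f : H), μ.1 (P (a, f)) = a) :=
  stmt_13_general mH P hP mU hmU
end
end

section
/- Let H be a unital RKHA on X and Y ⊆ X. Let I_Y = {f ∈ H : f|_Y = 0}, a closed ideal. Then the restriction RKHA H(Y) ≅ H/I_Y (Hilbert space quotient) and the Banach algebra quotient norm ‖[f]‖_B = inf_{g∈[f]} ‖M_g‖_op are equivalent norms: (1/C)‖f‖_{H(Y)} ≤ ‖[f]‖_B ≤ C‖f‖_{H(Y)} where C = max(‖1‖_H, ‖Δ‖_op). -/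
open scoped ComplexInnerProductSpace

/-!
Since `Δ k_x = k_x ⊗ k_x`, the multiplication operator is `M_g = Δ* ∘ (g ⊗ ·)`, so
`‖M_g‖ ≤ ‖Δ‖ ‖g‖`; and `M_g 1 = g` gives `‖g‖ ≤ ‖1‖ ‖M_g‖`. Both pointwise bounds hold for
every representative `g` of the class of `f` modulo `I_Y`, hence pass to the two infima.
-/

noncomputable section

theorem eq_of_forall_inner_of_dense_span {𝕜 E ι : Type*} [RCLike 𝕜] [NormedAddCommGroup E]
    [InnerProductSpace 𝕜 E] {k : ι → E} (hk : Dense (Submodule.span 𝕜 (Set.range k) : Set E))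
    {a b : E} (h : ∀ i, inner 𝕜 (k i) a = inner 𝕜 (k i) b) : a = b := by
  have hspan : Submodule.span 𝕜 (Set.range k) ≤ (𝕜 ∙ (a - b))ᗮ :=
    Submodule.span_le.2 <| Set.range_subset_iff.2 fun i => by
      rw [SetLike.mem_coe, Submodule.mem_orthogonal_singleton_iff_inner_left, inner_sub_right,
        h i, sub_self]
  refine hk.eq_of_inner_right 𝕜 fun v hv => ?_
  rw [← sub_eq_zero, ← inner_sub_right]
  exact Submodule.mem_orthogonal_singleton_iff_inner_left.1 (hspan hv)

theorem TensorLike.norm_tmul_s18 {H K HT : Type*} [NormedAddCommGroup H] [InnerProductSpace ℂ H]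
    [NormedAddCommGroup K] [InnerProductSpace ℂ K] [NormedAddCommGroup HT]
    [InnerProductSpace ℂ HT] (T : TensorLike H K HT) (g : H) (h : K) :
    ‖T.tmul g h‖ = ‖g‖ * ‖h‖ := by
  have hsq := T.inner_tmul g g h h
  simp only [inner_self_eq_norm_sq_to_K] at hsq
  have hsq' : ‖T.tmul g h‖ ^ 2 = (‖g‖ * ‖h‖) ^ 2 := by
    rw [mul_pow]
    exact_mod_cast hsq
  exact (pow_left_inj₀ (norm_nonneg _) (by positivity) two_ne_zero).1 hsq'

theorem sInf_le_mul_sInf_of_le_mul {α : Type*} {P : α → Prop} {u v : α → ℝ} {C : ℝ}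
    (hP : ∃ a, P a) (hu : ∀ a, 0 ≤ u a) (hC : 0 < C) (h : ∀ a, P a → u a ≤ C * v a) :
    sInf {r | ∃ a, P a ∧ r = u a} ≤ C * sInf {r | ∃ a, P a ∧ r = v a} := by
  obtain ⟨a₀, ha₀⟩ := hP
  have hbdd : BddBelow {r | ∃ a, P a ∧ r = u a} := ⟨0, by rintro r ⟨a, -, rfl⟩; exact hu a⟩
  rw [← div_le_iff₀' hC]
  refine le_csInf ⟨v a₀, a₀, ha₀, rfl⟩ ?_
  rintro r ⟨a, ha, rfl⟩
  rw [div_le_iff₀' hC]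
  exact (csInf_le hbdd ⟨a, ha, rfl⟩).trans (h a ha)

section RKHA

variable {X H HT : Type*} [NormedAddCommGroup H] [InnerProductSpace ℂ H]
  [NormedAddCommGroup HT] [InnerProductSpace ℂ HT]

theorem mul_eq_adjoint_tmul [CompleteSpace H] [CompleteSpace HT] {k : X → H}
    (hk : Dense (Submodule.span ℂ (Set.range k) : Set H))
    (T : TensorLike H H HT) {Δ : H →L[ℂ] HT} (hΔ : ∀ x, Δ (k x) = T.tmul (k x) (k x))
    {M : H → H →L[ℂ] H} (hM : ∀ (g h : H) (x : X), ⟪k x, M g h⟫ = ⟪k x, g⟫ * ⟪k x, h⟫)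
    (g h : H) : M g h = Δ.adjoint (T.tmul g h) :=
  eq_of_forall_inner_of_dense_span hk fun x => by
    rw [hM, ContinuousLinearMap.adjoint_inner_right, hΔ, T.inner_tmul]

theorem opNorm_mul_le [CompleteSpace H] [CompleteSpace HT] {k : X → H}
    (hk : Dense (Submodule.span ℂ (Set.range k) : Set H))
    (T : TensorLike H H HT) {Δ : H →L[ℂ] HT} (hΔ : ∀ x, Δ (k x) = T.tmul (k x) (k x))
    {M : H → H →L[ℂ] H} (hM : ∀ (g h : H) (x : X), ⟪k x, M g h⟫ = ⟪k x, g⟫ * ⟪k x, h⟫)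
    (g : H) : ‖M g‖ ≤ ‖Δ‖ * ‖g‖ := by
  refine ContinuousLinearMap.opNorm_le_bound _ (by positivity) fun h => ?_
  calc ‖M g h‖ = ‖Δ.adjoint (T.tmul g h)‖ := by rw [mul_eq_adjoint_tmul hk T hΔ hM]
    _ ≤ ‖Δ.adjoint‖ * ‖T.tmul g h‖ := Δ.adjoint.le_opNorm _
    _ = ‖Δ‖ * ‖g‖ * ‖h‖ := by rw [LinearIsometryEquiv.norm_map, T.norm_tmul_s18, mul_assoc]

theorem norm_le_norm_one_mul_opNorm_mul {k : X → H}
    (hk : Dense (Submodule.span ℂ (Set.range k) : Set H))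
    {one : H} (hone : ∀ x, ⟪k x, one⟫ = 1)
    {M : H → H →L[ℂ] H} (hM : ∀ (g h : H) (x : X), ⟪k x, M g h⟫ = ⟪k x, g⟫ * ⟪k x, h⟫)
    (g : H) : ‖g‖ ≤ ‖one‖ * ‖M g‖ := by
  have hMone : M g one = g :=
    eq_of_forall_inner_of_dense_span hk fun x => by rw [hM, hone, mul_one]
  calc ‖g‖ = ‖M g one‖ := by rw [hMone]
    _ ≤ ‖M g‖ * ‖one‖ := (M g).le_opNorm _
    _ = ‖one‖ * ‖M g‖ := mul_comm _ _

end RKHA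

/-- for a unital RKHA `H` on `X` and `Y ⊆ X`, the quotient Hilbert norm
`‖[f]‖ = inf {‖g‖ : g ≡ f on Y}` (the norm of the restriction RKHS `H(Y) ≅ H/I_Y`) and
the quotient Banach algebra norm `‖[f]‖_B = inf {‖M_g‖ : g ≡ f on Y}` are equivalent:
`(1/C)‖[f]‖ ≤ ‖[f]‖_B ≤ C‖[f]‖` with `C = max ‖1‖ ‖Δ‖`. -/
theorem stmt_18 {X H HT : Type*} [Nonempty X]
    [NormedAddCommGroup H] [InnerProductSpace ℂ H] [CompleteSpace H]
    [NormedAddCommGroup HT] [InnerProductSpace ℂ HT] [CompleteSpace HT]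
    (k : X → H) (hk : Dense (Submodule.span ℂ (Set.range k) : Set H))
    (T : TensorLike H H HT) (Δ : H →L[ℂ] HT)
    (hΔ : ∀ x, Δ (k x) = T.tmul (k x) (k x))
    (one : H) (hone : ∀ x, ⟪k x, one⟫ = 1)
    (M : H → H →L[ℂ] H)
    (hM : ∀ (g h : H) (x : X), ⟪k x, M g h⟫ = ⟪k x, g⟫ * ⟪k x, h⟫)
    (Y : Set X) (f : H) :
    (1 / max ‖one‖ ‖Δ‖) *
        sInf {r : ℝ | ∃ g : H, (∀ y ∈ Y, ⟪k y, g⟫ = ⟪k y, f⟫) ∧ r = ‖g‖} ≤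
      sInf {r : ℝ | ∃ g : H, (∀ y ∈ Y, ⟪k y, g⟫ = ⟪k y, f⟫) ∧ r = ‖M g‖} ∧
    sInf {r : ℝ | ∃ g : H, (∀ y ∈ Y, ⟪k y, g⟫ = ⟪k y, f⟫) ∧ r = ‖M g‖} ≤
      max ‖one‖ ‖Δ‖ *
        sInf {r : ℝ | ∃ g : H, (∀ y ∈ Y, ⟪k y, g⟫ = ⟪k y, f⟫) ∧ r = ‖g‖} := by
  have hone_ne : one ≠ 0 := by
    rintro rfl
    simpa using hone (Classical.arbitrary X)
  have hC : 0 < max ‖one‖ ‖Δ‖ := lt_max_of_lt_left (norm_pos_iff.2 hone_ne)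
  have hf : ∃ g : H, ∀ y ∈ Y, ⟪k y, g⟫ = ⟪k y, f⟫ := ⟨f, fun _ _ => rfl⟩
  constructor
  · rw [one_div, inv_mul_le_iff₀ hC]
    refine sInf_le_mul_sInf_of_le_mul hf (fun _ => norm_nonneg _) hC fun g _ => ?_
    exact (norm_le_norm_one_mul_opNorm_mul hk hone hM g).trans
      (mul_le_mul_of_nonneg_right (le_max_left _ _) (norm_nonneg _))
  · refine sInf_le_mul_sInf_of_le_mul hf (fun _ => norm_nonneg _) hC fun g _ => ?_
    exact (opNorm_mul_le hk T hΔ hM g).trans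
      (mul_le_mul_of_nonneg_right (le_max_right _ _) (norm_nonneg _))
end
end
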